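/- Upper bound via averaged Fourier dimensions: for θ ∈ (0,1] and finite Borel measures μ on ℝ^k, ν on ℝ^{d-k}, dim_F^θ (μ × ν) ≤ max{ F̄_μ(θ) + dim_F^θ ν , dim_F^θ μ + F̄_ν(θ) }, where F̄_m(θ) = limsup_{R → ∞} θ log( R^{-n} ∫_{|z| ≤ R} |m̂(z)|^{2/θ} dz ) / (−log R) for a measure m on ℝ^n. -/

import Mathlib

open MeasureTheory Metric Set
open scoped ENNReal NNReal Real

noncomputable section

abbrev Eℝ (n : ℕ) := EuclideanSpace ℝ (Fin n)

/-- The Fourier transform of a measure on ℝⁿ. -/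
def ftm {n : ℕ} (μ : Measure (Eℝ n)) (z : Eℝ n) : ℂ :=
  ∫ x, Complex.exp (-(2 * Real.pi * (inner ℝ z x : ℝ)) * Complex.I) ∂μ

/-- The (topological) support of `μ` is contained in `X`. -/
def SptIn {n : ℕ} (μ : Measure (Eℝ n)) (X : Set (Eℝ n)) : Prop :=
  ∀ U : Set (Eℝ n), IsOpen U → Disjoint U X → μ U = 0

/-- Fourier dimension of a measure (valued in ℝ≥0∞). -/
def fDim {n : ℕ} (μ : Measure (Eℝ n)) : ℝ≥0∞ :=
  ⨆ s ∈ {s : ℝ | 0 ≤ s ∧ ∃ C > 0, ∀ z : Eℝ n, z ≠ 0 → ‖ftm μ z‖ ≤ C * ‖z‖ ^ (-(s / 2))},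
    ENNReal.ofReal s

/-- Finiteness of the energy J_{s,θ}(μ). -/
def Jfin (n : ℕ) (μ : Measure (Eℝ n)) (s θ : ℝ) : Prop :=
  (∫⁻ z : Eℝ n, ENNReal.ofReal (‖ftm μ z‖ ^ (2 / θ) * ‖z‖ ^ (s / θ - (n : ℝ)))) < ∞

/-- The Fourier spectrum of a measure at θ. -/
def fSpec (n : ℕ) (μ : Measure (Eℝ n)) (θ : ℝ) : ℝ≥0∞ :=
  if θ = 0 then fDim μ
  else ⨆ s ∈ {s : ℝ | 0 ≤ s ∧ Jfin n μ s θ}, ENNReal.ofReal s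

/-- The Fourier spectrum of a set at θ. -/
def fSpecSet (n : ℕ) (X : Set (Eℝ n)) (θ : ℝ) : ℝ≥0∞ :=
  ⨆ μ ∈ {μ : Measure (Eℝ n) | μ ≠ 0 ∧ IsFiniteMeasure μ ∧ SptIn μ X},
    min (fSpec n μ θ) (n : ℝ≥0∞)

/-- The extended Fourier spectrum of a set at θ. -/
def eFSpecSet (n : ℕ) (X : Set (Eℝ n)) (θ : ℝ) : ℝ≥0∞ :=
  ⨆ μ ∈ {μ : Measure (Eℝ n) | μ ≠ 0 ∧ IsFiniteMeasure μ ∧ SptIn μ X}, fSpec n μ θ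

/-- Fourier dimension of a set. -/
def fDimSet (n : ℕ) (X : Set (Eℝ n)) : ℝ≥0∞ := fSpecSet n X 0

/-- Extended Fourier dimension of a set. -/
def eFDimSet (n : ℕ) (X : Set (Eℝ n)) : ℝ≥0∞ := eFSpecSet n X 0

/-- Identification of ℝᵏ × ℝᵐ with ℝ^{k+m}. -/
def prodMap (k m : ℕ) (p : Eℝ k × Eℝ m) : Eℝ (k + m) :=
  WithLp.toLp 2 (fun i => Fin.addCases (fun j => p.1 j) (fun j => p.2 j) i)

/-- The product measure μ × ν, viewed as a measure on ℝ^{k+m}. -/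
def mprod {k m : ℕ} (μ : Measure (Eℝ k)) (ν : Measure (Eℝ m)) : Measure (Eℝ (k + m)) :=
  (μ.prod ν).map (prodMap k m)

/-- The unit cube [0,1]ⁿ. -/
def cube (n : ℕ) : Set (Eℝ n) := {x | ∀ i, x i ∈ Set.Icc (0 : ℝ) 1}


/-- The upper averaged Fourier dimension F̄_μ(θ): the infimum of β ≥ 0 such that
R^{n-β/θ} ≲ ∫_{|z| ≤ R} |μ̂(z)|^{2/θ} dz. -/
noncomputable def upperAvgF (n : ℕ) (μ : Measure (Eℝ n)) (θ : ℝ) : ℝ :=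
  sInf {β : ℝ | 0 ≤ β ∧ ∃ c > (0 : ℝ), ∀ R ≥ (1 : ℝ),
    ENNReal.ofReal (c * R ^ ((n : ℝ) - β / θ)) ≤
      ∫⁻ z in {z : Eℝ n | ‖z‖ ≤ R}, ENNReal.ofReal (‖ftm μ z‖ ^ (2 / θ))}

set_option maxHeartbeats 1000000

lemma norm_exp_aux (r : ℝ) : ‖Complex.exp (-(2 * Real.pi * (r : ℂ)) * Complex.I)‖ = 1 := by
  simp [Complex.norm_exp]

lemma ftm_cont {n : ℕ} (μ : Measure (Eℝ n)) [IsFiniteMeasure μ] : Continuous (ftm μ) := by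
  apply continuous_of_dominated (bound := fun _ => 1)
  · intro z
    refine Continuous.aestronglyMeasurable ?_
    have h1 : Continuous fun x : Eℝ n => (inner ℝ z x : ℝ) := continuous_const.inner continuous_id
    exact Complex.continuous_exp.comp
      (((continuous_const.mul (Complex.continuous_ofReal.comp h1)).neg).mul continuous_const)
  · intro z
    filter_upwards with x
    exact le_of_eq (norm_exp_aux _)
  · exact integrable_const 1
  · filter_upwards with x
    have h1 : Continuous fun z : Eℝ n => (inner ℝ z x : ℝ) := continuous_id.inner continuous_const
    exact Complex.continuous_exp.comp
      (((continuous_const.mul (Complex.continuous_ofReal.comp h1)).neg).mul continuous_const)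

lemma ftm_norm_le {n : ℕ} (μ : Measure (Eℝ n)) [IsFiniteMeasure μ] (z : Eℝ n) :
    ‖ftm μ z‖ ≤ (μ Set.univ).toReal := by
  calc ‖ftm μ z‖ ≤ ∫ x, ‖Complex.exp (-(2 * Real.pi * (inner ℝ z x : ℝ)) * Complex.I)‖ ∂μ :=
        norm_integral_le_integral_norm _
    _ = ∫ (_ : Eℝ n), 1 ∂μ := by
        congr 1; funext x; exact norm_exp_aux _
    _ = (μ Set.univ).toReal := by simp [measureReal_def]

lemma ftm_zero {n : ℕ} (μ : Measure (Eℝ n)) [IsFiniteMeasure μ] :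
    ftm μ 0 = ((μ Set.univ).toReal : ℂ) := by
  unfold ftm
  have : ∀ x : Eℝ n, (inner ℝ (0 : Eℝ n) x : ℝ) = 0 := fun x => inner_zero_left x
  simp [this, measureReal_def]

lemma prodMap_castAdd (k m : ℕ) (p : Eℝ k × Eℝ m) (j : Fin k) :
    prodMap k m p (Fin.castAdd m j) = p.1 j := by
  simp [prodMap]

lemma prodMap_natAdd (k m : ℕ) (p : Eℝ k × Eℝ m) (j : Fin m) :
    prodMap k m p (Fin.natAdd k j) = p.2 j := by
  simp [prodMap]

def bigEquiv (k m : ℕ) : (Eℝ k × Eℝ m) ≃ᵐ Eℝ (k + m) :=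
  (((MeasurableEquiv.toLp 2 (Fin k → ℝ)).symm.prodCongr
      (MeasurableEquiv.toLp 2 (Fin m → ℝ)).symm).trans
    ((MeasurableEquiv.sumPiEquivProdPi (fun _ : Fin k ⊕ Fin m => ℝ)).symm.trans
      ((MeasurableEquiv.piCongrLeft (fun _ => ℝ) finSumFinEquiv).trans
        (MeasurableEquiv.toLp 2 (Fin (k + m) → ℝ)).symm.symm)))

lemma bigEquiv_eq_prodMap (k m : ℕ) : ⇑(bigEquiv k m) = prodMap k m := by
  funext p
  ext i
  induction i using Fin.addCases with
  | left j =>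
      rw [prodMap_castAdd]
      show (MeasurableEquiv.piCongrLeft (fun _ => ℝ) finSumFinEquiv)
          ((MeasurableEquiv.sumPiEquivProdPi (fun _ : Fin k ⊕ Fin m => ℝ)).symm
            (p.1, p.2)) (Fin.castAdd m j) = p.1 j
      rw [← finSumFinEquiv_apply_left j, MeasurableEquiv.piCongrLeft_apply_apply]
      rfl
  | right j =>
      rw [prodMap_natAdd]
      show (MeasurableEquiv.piCongrLeft (fun _ => ℝ) finSumFinEquiv)
          ((MeasurableEquiv.sumPiEquivProdPi (fun _ : Fin k ⊕ Fin m => ℝ)).symm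
            (p.1, p.2)) (Fin.natAdd k j) = p.2 j
      rw [← finSumFinEquiv_apply_right j, MeasurableEquiv.piCongrLeft_apply_apply]
      rfl

lemma prodMap_measurePreserving (k m : ℕ) :
    MeasurePreserving (prodMap k m) ((volume : Measure (Eℝ k)).prod volume) volume := by
  rw [← bigEquiv_eq_prodMap]
  have e1 : MeasurePreserving
      (⇑((MeasurableEquiv.toLp 2 (Fin k → ℝ)).symm.prodCongr
        (MeasurableEquiv.toLp 2 (Fin m → ℝ)).symm))
      ((volume : Measure (Eℝ k)).prod volume)
      ((volume : Measure (Fin k → ℝ)).prod volume) :=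
    (EuclideanSpace.volume_preserving_symm_measurableEquiv_toLp (Fin k)).prod
      (EuclideanSpace.volume_preserving_symm_measurableEquiv_toLp (Fin m))
  have e2 := volume_measurePreserving_sumPiEquivProdPi_symm (fun _ : Fin k ⊕ Fin m => ℝ)
  have e3 := volume_measurePreserving_piCongrLeft (fun _ : Fin (k+m) => ℝ) finSumFinEquiv
  have e4 := PiLp.volume_preserving_toLp (Fin (k+m))
  have := (e4.comp (e3.comp (e2.comp e1)))
  exact this

lemma prodMap_measurable (k m : ℕ) : Measurable (prodMap k m) := by
  rw [← bigEquiv_eq_prodMap]; exact (bigEquiv k m).measurable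

lemma norm_prodMap_sq (k m : ℕ) (p : Eℝ k × Eℝ m) :
    ‖prodMap k m p‖ ^ (2:ℕ) = ‖p.1‖ ^ (2:ℕ) + ‖p.2‖ ^ (2:ℕ) := by
  have h1 : ‖prodMap k m p‖ = Real.sqrt (∑ i, ‖prodMap k m p i‖ ^ (2:ℕ)) :=
    EuclideanSpace.norm_eq _
  rw [h1, Real.sq_sqrt (Finset.sum_nonneg fun i _ => by positivity), Fin.sum_univ_add]
  simp only [prodMap_castAdd, prodMap_natAdd]
  rw [EuclideanSpace.norm_eq p.1, EuclideanSpace.norm_eq p.2,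
    Real.sq_sqrt (Finset.sum_nonneg fun i _ => by positivity),
    Real.sq_sqrt (Finset.sum_nonneg fun i _ => by positivity)]

/-- left/right components of a frequency vector -/
def ζL {k m : ℕ} (ζ : Eℝ (k+m)) : Eℝ k := WithLp.toLp 2 fun i => ζ (Fin.castAdd m i)
def ζR {k m : ℕ} (ζ : Eℝ (k+m)) : Eℝ m := WithLp.toLp 2 fun j => ζ (Fin.natAdd k j)

lemma inner_prodMap {k m : ℕ} (ζ : Eℝ (k+m)) (p : Eℝ k × Eℝ m) :
    (inner ℝ ζ (prodMap k m p) : ℝ) = (inner ℝ (ζL ζ) p.1 : ℝ) + (inner ℝ (ζR ζ) p.2 : ℝ) := by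
  simp only [PiLp.inner_apply, RCLike.inner_apply, conj_trivial]
  rw [Fin.sum_univ_add]
  congr 1
  · exact Finset.sum_congr rfl fun j _ => by rw [prodMap_castAdd]; rfl
  · exact Finset.sum_congr rfl fun j _ => by rw [prodMap_natAdd]; rfl

lemma ftm_mprod {k m : ℕ} (μ : Measure (Eℝ k)) (ν : Measure (Eℝ m))
    [IsFiniteMeasure μ] [IsFiniteMeasure ν] (ζ : Eℝ (k+m)) :
    ftm (mprod μ ν) ζ = ftm μ (ζL ζ) * ftm ν (ζR ζ) := by
  unfold ftm mprod
  rw [integral_map (prodMap_measurable k m).aemeasurable]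
  · have : ∀ p : Eℝ k × Eℝ m,
        Complex.exp (-(2 * Real.pi * (inner ℝ ζ (prodMap k m p) : ℝ)) * Complex.I)
          = Complex.exp (-(2 * Real.pi * (inner ℝ (ζL ζ) p.1 : ℝ)) * Complex.I)
            * Complex.exp (-(2 * Real.pi * (inner ℝ (ζR ζ) p.2 : ℝ)) * Complex.I) := by
      intro p
      rw [← Complex.exp_add]
      congr 1
      rw [inner_prodMap]
      push_cast
      ring
    simp_rw [this]
    exact integral_prod_mul
      (fun x => Complex.exp (-(2 * Real.pi * (inner ℝ (ζL ζ) x : ℝ)) * Complex.I))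
      (fun y => Complex.exp (-(2 * Real.pi * (inner ℝ (ζR ζ) y : ℝ)) * Complex.I))
  · refine Continuous.aestronglyMeasurable ?_
    have h1 : Continuous fun x : Eℝ (k+m) => (inner ℝ ζ x : ℝ) := continuous_const.inner continuous_id
    exact Complex.continuous_exp.comp
      (((continuous_const.mul (Complex.continuous_ofReal.comp h1)).neg).mul continuous_const)


lemma ζL_prodMap {k m : ℕ} (p : Eℝ k × Eℝ m) : ζL (prodMap k m p) = p.1 :=
  PiLp.ext fun i => prodMap_castAdd k m p i

lemma ζR_prodMap {k m : ℕ} (p : Eℝ k × Eℝ m) : ζR (prodMap k m p) = p.2 :=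
  PiLp.ext fun j => prodMap_natAdd k m p j

lemma nontrivial_E (n : ℕ) (hn : 1 ≤ n) : Nontrivial (Eℝ n) := by
  apply Module.nontrivial_of_finrank_pos (R := ℝ)
  rw [finrank_euclideanSpace, Fintype.card_fin]
  omega

lemma lint_small_rpow (n : ℕ) (hn : 1 ≤ n) {a : ℝ} (ha : -(n:ℝ) < a) :
    ∫⁻ z in {z : Eℝ n | ‖z‖ < 1}, ENNReal.ofReal (‖z‖ ^ a) < ∞ := by
  haveI : Nontrivial (Eℝ n) := nontrivial_E n hn
  rcases le_or_gt 0 a with hA | hA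
  · -- easy case, integrand ≤ 1
    calc ∫⁻ z in {z : Eℝ n | ‖z‖ < 1}, ENNReal.ofReal (‖z‖ ^ a)
        ≤ ∫⁻ _ in {z : Eℝ n | ‖z‖ < 1}, 1 := by
          refine setLIntegral_mono measurable_const fun z hz => ?_
          simpa using ENNReal.ofReal_le_one.mpr (Real.rpow_le_one (norm_nonneg _) hz.le hA)
      _ = volume {z : Eℝ n | ‖z‖ < 1} := by simp
      _ ≤ volume (ball (0 : Eℝ n) 1) := by
          apply measure_mono; intro z hz; simpa [mem_ball, dist_zero_right] using hz
      _ < ∞ := measure_ball_lt_top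
  · -- hard case a < 0: dyadic annuli
    set C : ℕ → Set (Eℝ n) := fun j => {z | (2:ℝ) ^ (-(j:ℝ)-1) < ‖z‖ ∧ ‖z‖ ≤ (2:ℝ) ^ (-(j:ℝ))}
      with hC
    have hcover : {z : Eℝ n | ‖z‖ < 1} ⊆ {(0 : Eℝ n)} ∪ ⋃ j, C j := by
      intro z hz
      rcases eq_or_ne z 0 with rfl | hz0
      · exact Or.inl rfl
      right
      have hzlt : ‖z‖ < 1 := hz
      have hr : 0 < ‖z‖ := norm_pos_iff.mpr hz0
      have hr1 : 1 ≤ ‖z‖⁻¹ := (one_le_inv₀ hr).mpr hzlt.le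
      set x := Real.logb 2 ‖z‖⁻¹ with hx
      have hx0 : 0 ≤ x := Real.logb_nonneg one_lt_two hr1
      set j := ⌊x⌋₊ with hj
      have h2x : (2:ℝ) ^ x = ‖z‖⁻¹ := Real.rpow_logb two_pos (by norm_num) (by positivity)
      have hle : (2:ℝ) ^ (j:ℝ) ≤ ‖z‖⁻¹ := by
        rw [← h2x]
        exact Real.rpow_le_rpow_of_exponent_le one_le_two (Nat.floor_le hx0)
      have hlt : ‖z‖⁻¹ < (2:ℝ) ^ ((j:ℝ)+1) := by
        rw [← h2x]
        exact Real.rpow_lt_rpow_of_exponent_lt one_lt_two (Nat.lt_floor_add_one x)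
      refine mem_iUnion.mpr ⟨j, ?_, ?_⟩
      · -- 2^(-j-1) < ‖z‖
        have : (2:ℝ) ^ (-(j:ℝ)-1) = ((2:ℝ) ^ ((j:ℝ)+1))⁻¹ := by
          rw [← Real.rpow_neg two_pos.le]; ring_nf
        rw [this]
        rw [inv_lt_comm₀ (by positivity) hr]
        exact hlt
      · -- ‖z‖ ≤ 2^(-j)
        have : (2:ℝ) ^ (-(j:ℝ)) = ((2:ℝ) ^ ((j:ℝ)))⁻¹ := by
          rw [← Real.rpow_neg two_pos.le]
        rw [this, le_inv_comm₀ hr (by positivity)]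
        exact hle
    calc ∫⁻ z in {z : Eℝ n | ‖z‖ < 1}, ENNReal.ofReal (‖z‖ ^ a)
        ≤ ∫⁻ z in ({(0:Eℝ n)} ∪ ⋃ j, C j), ENNReal.ofReal (‖z‖ ^ a) :=
          lintegral_mono_set hcover
      _ ≤ (∫⁻ z in {(0:Eℝ n)}, ENNReal.ofReal (‖z‖ ^ a))
            + ∫⁻ z in ⋃ j, C j, ENNReal.ofReal (‖z‖ ^ a) := lintegral_union_le _ _ _
      _ ≤ 0 + ∑' j, ∫⁻ z in C j, ENNReal.ofReal (‖z‖ ^ a) := by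
          gcongr
          · have : volume ({(0:Eℝ n)} : Set (Eℝ n)) = 0 := measure_singleton _
            rw [setLIntegral_measure_zero _ _ this]
          · exact lintegral_iUnion_le _ _
      _ = ∑' j, ∫⁻ z in C j, ENNReal.ofReal (‖z‖ ^ a) := by rw [zero_add]
      _ ≤ ∑' j, ENNReal.ofReal (2 ^ (-a)) * ENNReal.ofReal ((2:ℝ) ^ (-(a+(n:ℝ)))) ^ j
            * volume (ball (0 : Eℝ n) 1) := by
          apply ENNReal.tsum_le_tsum
          intro j
          have hbound : ∀ z ∈ C j, ENNReal.ofReal (‖z‖ ^ a)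
              ≤ ENNReal.ofReal ((2:ℝ) ^ ((-(j:ℝ)-1)*a)) := by
            intro z hz
            apply ENNReal.ofReal_le_ofReal
            have h1 : ((2:ℝ) ^ (-(j:ℝ)-1)) ^ a = (2:ℝ) ^ ((-(j:ℝ)-1)*a) := by
              rw [← Real.rpow_mul two_pos.le]
            rw [← h1]
            exact Real.rpow_le_rpow_of_nonpos (by positivity) hz.1.le hA.le
          calc ∫⁻ z in C j, ENNReal.ofReal (‖z‖ ^ a)
              ≤ ∫⁻ _ in C j, ENNReal.ofReal ((2:ℝ) ^ ((-(j:ℝ)-1)*a)) :=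
                setLIntegral_mono measurable_const hbound
            _ = ENNReal.ofReal ((2:ℝ) ^ ((-(j:ℝ)-1)*a)) * volume (C j) := by
                rw [setLIntegral_const]
            _ ≤ ENNReal.ofReal ((2:ℝ) ^ ((-(j:ℝ)-1)*a))
                  * volume (closedBall (0 : Eℝ n) ((2:ℝ) ^ (-(j:ℝ)))) := by
                gcongr
                intro z hz
                simpa [mem_closedBall, dist_zero_right] using hz.2
            _ = ENNReal.ofReal ((2:ℝ) ^ ((-(j:ℝ)-1)*a))
                  * (ENNReal.ofReal (((2:ℝ) ^ (-(j:ℝ))) ^ Module.finrank ℝ (Eℝ n))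
                    * volume (ball (0 : Eℝ n) 1)) := by
                rw [Measure.addHaar_closedBall _ _ (by positivity)]
            _ = ENNReal.ofReal (2 ^ (-a)) * ENNReal.ofReal ((2:ℝ) ^ (-(a+(n:ℝ)))) ^ j
                  * volume (ball (0 : Eℝ n) 1) := by
                rw [← mul_assoc]
                congr 1
                rw [finrank_euclideanSpace, Fintype.card_fin,
                  ← ENNReal.ofReal_pow (by positivity), ← ENNReal.ofReal_mul (by positivity),
                  ← ENNReal.ofReal_mul (by positivity)]
                congr 1
                rw [← Real.rpow_natCast ((2:ℝ) ^ (-(j:ℝ))) n, ← Real.rpow_mul two_pos.le,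
                  ← Real.rpow_natCast ((2:ℝ) ^ (-(a+(n:ℝ)))) j, ← Real.rpow_mul two_pos.le,
                  ← Real.rpow_add two_pos, ← Real.rpow_add two_pos]
                congr 1
                ring
      _ = ENNReal.ofReal (2 ^ (-a)) * volume (ball (0 : Eℝ n) 1)
            * ∑' j, ENNReal.ofReal ((2:ℝ) ^ (-(a+(n:ℝ)))) ^ j := by
          rw [← ENNReal.tsum_mul_left]
          congr 1
          funext j
          ring
      _ < ∞ := by
          have hrlt : ENNReal.ofReal ((2:ℝ) ^ (-(a+(n:ℝ)))) < 1 := by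
            rw [← ENNReal.ofReal_one]
            apply ENNReal.ofReal_lt_ofReal_iff_of_nonneg (by positivity) |>.mpr
            apply Real.rpow_lt_one_of_one_lt_of_neg one_lt_two
            have : (0:ℝ) < a + n := by linarith
            linarith
          rw [ENNReal.tsum_geometric]
          apply ENNReal.mul_lt_top
          · exact ENNReal.mul_lt_top ENNReal.ofReal_lt_top measure_ball_lt_top
          · rw [ENNReal.inv_lt_top, tsub_pos_iff_lt]
            exact hrlt

lemma avgF_set_mem (n : ℕ) (ν : Measure (Eℝ n)) [IsFiniteMeasure ν] (hν : ν ≠ 0)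
    (θ : ℝ) (hθ : 0 < θ) :
    ∃ c > (0:ℝ), ∀ R ≥ (1:ℝ),
      ENNReal.ofReal (c * R ^ ((n : ℝ) - ((n:ℝ)*θ) / θ)) ≤
        ∫⁻ z in {z : Eℝ n | ‖z‖ ≤ R}, ENNReal.ofReal (‖ftm ν z‖ ^ (2 / θ)) := by
  have hT : 0 < (ν Set.univ).toReal := by
    apply ENNReal.toReal_pos
    · simpa [Measure.measure_univ_eq_zero] using hν
    · exact (measure_lt_top ν _).ne
  set T := (ν Set.univ).toReal with hTdef
  -- find a small ball where ‖ftm ν‖ ≥ T/2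
  have hopen : IsOpen {z : Eℝ n | T / 2 < ‖ftm ν z‖} :=
    isOpen_lt continuous_const (ftm_cont ν).norm
  have h0mem : (0 : Eℝ n) ∈ {z : Eℝ n | T / 2 < ‖ftm ν z‖} := by
    simp only [mem_setOf_eq, ftm_zero ν]
    rw [Complex.norm_real, Real.norm_eq_abs, abs_of_pos hT]
    linarith
  obtain ⟨r, hr, hball⟩ := Metric.isOpen_iff.mp hopen 0 h0mem
  set r' := min (r/2) 1 with hr'def
  have hr'pos : 0 < r' := lt_min (by linarith) one_pos
  have hr'le1 : r' ≤ 1 := min_le_right _ _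
  have hsub : closedBall (0 : Eℝ n) r' ⊆ {z : Eℝ n | T / 2 < ‖ftm ν z‖} := by
    intro z hz
    apply hball
    rw [mem_ball, dist_zero_right]
    calc ‖z‖ ≤ r' := by simpa [dist_zero_right] using hz
      _ ≤ r/2 := min_le_left _ _
      _ < r := by linarith
  set c := (T/2) ^ (2/θ) * (volume (closedBall (0 : Eℝ n) r')).toReal with hcdef
  have hvpos : 0 < volume (closedBall (0 : Eℝ n) r') := measure_closedBall_pos _ _ hr'pos
  have hvne : volume (closedBall (0 : Eℝ n) r') ≠ ⊤ := measure_closedBall_lt_top.ne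
  refine ⟨c, ?_, ?_⟩
  · apply mul_pos (Real.rpow_pos_of_pos (by linarith) _)
    exact ENNReal.toReal_pos hvpos.ne' hvne
  intro R hR
  have hexp : (n : ℝ) - ((n:ℝ)*θ) / θ = 0 := by rw [mul_div_assoc, div_self hθ.ne', mul_one, sub_self]
  rw [hexp, Real.rpow_zero, mul_one]
  calc ENNReal.ofReal c
      = ENNReal.ofReal ((T/2) ^ (2/θ)) * volume (closedBall (0 : Eℝ n) r') := by
        rw [hcdef, ENNReal.ofReal_mul (by positivity), ENNReal.ofReal_toReal hvne]
    _ = ∫⁻ _ in closedBall (0 : Eℝ n) r', ENNReal.ofReal ((T/2) ^ (2/θ)) := by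
        rw [setLIntegral_const]
    _ ≤ ∫⁻ z in closedBall (0 : Eℝ n) r', ENNReal.ofReal (‖ftm ν z‖ ^ (2/θ)) := by
        refine setLIntegral_mono ?_ ?_
        · exact (ENNReal.continuous_ofReal.comp
            ((ftm_cont ν).norm.rpow_const fun x => Or.inr (by positivity))).measurable
        · intro z hz
          apply ENNReal.ofReal_le_ofReal
          exact Real.rpow_le_rpow (by linarith) (hsub hz).le (by positivity)
    _ ≤ ∫⁻ z in {z : Eℝ n | ‖z‖ ≤ R}, ENNReal.ofReal (‖ftm ν z‖ ^ (2/θ)) := by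
        apply lintegral_mono_set
        intro z hz
        simp only [mem_setOf_eq]
        calc ‖z‖ ≤ r' := by simpa [dist_zero_right] using hz
          _ ≤ 1 := hr'le1
          _ ≤ R := hR
  
lemma upperAvgF_nonneg (n : ℕ) (ν : Measure (Eℝ n)) (θ : ℝ) : 0 ≤ upperAvgF n ν θ :=
  Real.sInf_nonneg fun _ hβ => hβ.1

lemma avgF_exists (n : ℕ) (ν : Measure (Eℝ n)) [IsFiniteMeasure ν] (hν : ν ≠ 0)
    (θ : ℝ) (hθ : 0 < θ) {ε : ℝ} (hε : 0 < ε) :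
    ∃ β c, 0 ≤ β ∧ β < upperAvgF n ν θ + ε ∧ 0 < c ∧ ∀ R ≥ (1:ℝ),
      ENNReal.ofReal (c * R ^ ((n : ℝ) - β / θ)) ≤
        ∫⁻ z in {z : Eℝ n | ‖z‖ ≤ R}, ENNReal.ofReal (‖ftm ν z‖ ^ (2 / θ)) := by
  set S := {β : ℝ | 0 ≤ β ∧ ∃ c > (0 : ℝ), ∀ R ≥ (1 : ℝ),
    ENNReal.ofReal (c * R ^ ((n : ℝ) - β / θ)) ≤
      ∫⁻ z in {z : Eℝ n | ‖z‖ ≤ R}, ENNReal.ofReal (‖ftm ν z‖ ^ (2 / θ))} with hS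
  have hne : S.Nonempty := by
    obtain ⟨c, hc, hb⟩ := avgF_set_mem n ν hν θ hθ
    exact ⟨(n:ℝ)*θ, by positivity, c, hc, hb⟩
  have : sInf S < sInf S + ε := by linarith
  obtain ⟨β, hβS, hβlt⟩ := Real.lt_sInf_add_pos hne hε
  exact ⟨β, hβS.2.choose, hβS.1, hβlt, hβS.2.choose_spec.1, hβS.2.choose_spec.2⟩

lemma rpow_bound {Z N : ℝ} (hZ : 0 < Z) (h1 : Z ≤ N) (h2 : N ≤ Real.sqrt 2 * Z) (t : ℝ) :
    min 1 (Real.sqrt 2 ^ t) * Z ^ t ≤ N ^ t := by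
  have hs2 : (0:ℝ) < Real.sqrt 2 := Real.sqrt_pos.mpr two_pos
  rcases le_or_gt 0 t with ht | ht
  · calc min 1 (Real.sqrt 2 ^ t) * Z ^ t
        ≤ 1 * Z ^ t := mul_le_mul_of_nonneg_right (min_le_left _ _) (Real.rpow_nonneg hZ.le t)
      _ = Z ^ t := one_mul _
      _ ≤ N ^ t := Real.rpow_le_rpow hZ.le h1 ht
  · calc min 1 (Real.sqrt 2 ^ t) * Z ^ t
        ≤ Real.sqrt 2 ^ t * Z ^ t :=
          mul_le_mul_of_nonneg_right (min_le_right _ _) (Real.rpow_nonneg hZ.le t)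
      _ = (Real.sqrt 2 * Z) ^ t := (Real.mul_rpow hs2.le hZ.le).symm
      _ ≤ N ^ t := Real.rpow_le_rpow_of_nonpos (lt_of_lt_of_le hZ h1) h2 ht.le

lemma mprod_finite {k m : ℕ} (μ : Measure (Eℝ k)) (ν : Measure (Eℝ m))
    [IsFiniteMeasure μ] [IsFiniteMeasure ν] : IsFiniteMeasure (mprod μ ν) := by
  constructor
  rw [mprod, Measure.map_apply (prodMap_measurable k m) MeasurableSet.univ]
  exact measure_lt_top _ _

lemma key_lemma (k m : ℕ) (hk : 1 ≤ k)
    (μ : Measure (Eℝ k)) (ν : Measure (Eℝ m))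
    [IsFiniteMeasure μ] [IsFiniteMeasure ν]
    (θ : ℝ) (hθ0 : 0 < θ) (s β c : ℝ) (hc : 0 < c) (hβs : β < s)
    (hbound : ∀ R ≥ (1:ℝ), ENNReal.ofReal (c * R ^ ((m : ℝ) - β / θ)) ≤
        ∫⁻ w in {w : Eℝ m | ‖w‖ ≤ R}, ENNReal.ofReal (‖ftm ν w‖ ^ (2 / θ)))
    (hJ : Jfin (k + m) (mprod μ ν) s θ) : Jfin k μ (s - β) θ := by
  haveI : IsFiniteMeasure (mprod μ ν) := mprod_finite μ ν
  set t := s / θ - ((k + m : ℕ) : ℝ) with ht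
  set e := (s - β) / θ - (k : ℝ) with he
  have hee : -(k:ℝ) < e := by
    have hse : 0 < (s - β) / θ := div_pos (by linarith) hθ0
    rw [he]; linarith
  have hexp : e = t + ((m:ℝ) - β / θ) := by
    rw [he, ht, sub_div]
    push_cast
    ring
  set ct := min 1 (Real.sqrt 2 ^ t) with hct
  have hctpos : 0 < ct :=
    lt_min one_pos (Real.rpow_pos_of_pos (Real.sqrt_pos.mpr two_pos) t)
  -- measurability helpers
  have hr1 : Measurable fun x : ℝ => x ^ (2/θ) := by measurability
  have hrt : Measurable fun x : ℝ => x ^ t := by measurability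
  have hre : Measurable fun x : ℝ => x ^ e := by measurability
  have hμm : Measurable fun z : Eℝ k => ‖ftm μ z‖ := (ftm_cont μ).norm.measurable
  have hνm : Measurable fun w : Eℝ m => ‖ftm ν w‖ := (ftm_cont ν).norm.measurable
  have hmm : Measurable fun ζ : Eℝ (k+m) => ‖ftm (mprod μ ν) ζ‖ :=
    (ftm_cont (mprod μ ν)).norm.measurable
  have hFmeas : Measurable (fun ζ : Eℝ (k+m) =>
      ENNReal.ofReal (‖ftm (mprod μ ν) ζ‖ ^ (2/θ) * ‖ζ‖ ^ t)) :=
    ((hr1.comp hmm).mul (hrt.comp measurable_norm)).ennreal_ofReal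
  have hΦmeas : Measurable (fun p : Eℝ k × Eℝ m =>
      ENNReal.ofReal (‖ftm μ p.1‖ ^ (2/θ)) * ENNReal.ofReal (‖prodMap k m p‖ ^ t)
        * ENNReal.ofReal (‖ftm ν p.2‖ ^ (2/θ))) :=
    (((hr1.comp (hμm.comp measurable_fst)).ennreal_ofReal.mul
      ((hrt.comp ((prodMap_measurable k m).norm)).ennreal_ofReal)).mul
      ((hr1.comp (hνm.comp measurable_snd)).ennreal_ofReal))
  have hHmeas : Measurable (fun w : Eℝ m => ENNReal.ofReal (‖ftm ν w‖ ^ (2/θ))) :=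
    (hr1.comp hνm).ennreal_ofReal
  have hGmeas : Measurable (fun z : Eℝ k =>
      ENNReal.ofReal (‖ftm μ z‖ ^ (2/θ) * ‖z‖ ^ e)) :=
    ((hr1.comp hμm).mul (hre.comp measurable_norm)).ennreal_ofReal
  have hJ' : (∫⁻ ζ : Eℝ (k+m),
      ENNReal.ofReal (‖ftm (mprod μ ν) ζ‖ ^ (2/θ) * ‖ζ‖ ^ t)) < ∞ := by
    rw [ht]; exact hJ
  -- pointwise factorization
  have hΦF : ∀ p : Eℝ k × Eℝ m,
      ENNReal.ofReal (‖ftm μ p.1‖ ^ (2/θ)) * ENNReal.ofReal (‖prodMap k m p‖ ^ t)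
        * ENNReal.ofReal (‖ftm ν p.2‖ ^ (2/θ))
      = ENNReal.ofReal (‖ftm (mprod μ ν) (prodMap k m p)‖ ^ (2/θ) * ‖prodMap k m p‖ ^ t) := by
    intro p
    rw [ftm_mprod, ζL_prodMap, ζR_prodMap, norm_mul,
      Real.mul_rpow (norm_nonneg _) (norm_nonneg _),
      ENNReal.ofReal_mul (by positivity), ENNReal.ofReal_mul (by positivity)]
    ring
  have hΦfin : (∫⁻ p : Eℝ k × Eℝ m,
      ENNReal.ofReal (‖ftm μ p.1‖ ^ (2/θ)) * ENNReal.ofReal (‖prodMap k m p‖ ^ t)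
        * ENNReal.ofReal (‖ftm ν p.2‖ ^ (2/θ))
      ∂((volume : Measure (Eℝ k)).prod volume)) < ∞ := by
    calc (∫⁻ p : Eℝ k × Eℝ m,
        ENNReal.ofReal (‖ftm μ p.1‖ ^ (2/θ)) * ENNReal.ofReal (‖prodMap k m p‖ ^ t)
          * ENNReal.ofReal (‖ftm ν p.2‖ ^ (2/θ))
        ∂((volume : Measure (Eℝ k)).prod volume))
        = ∫⁻ p : Eℝ k × Eℝ m,
            ENNReal.ofReal (‖ftm (mprod μ ν) (prodMap k m p)‖ ^ (2/θ) * ‖prodMap k m p‖ ^ t)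
            ∂((volume : Measure (Eℝ k)).prod volume) := lintegral_congr hΦF
      _ = ∫⁻ ζ : Eℝ (k+m), ENNReal.ofReal (‖ftm (mprod μ ν) ζ‖ ^ (2/θ) * ‖ζ‖ ^ t) :=
          (prodMap_measurePreserving k m).lintegral_comp hFmeas
      _ < ∞ := hJ'
  set A : Set (Eℝ k) := {z | 1 ≤ ‖z‖} with hA
  have hAmeas : MeasurableSet A := (isClosed_le continuous_const continuous_norm).measurableSet
  have key : ∀ z ∈ A, ENNReal.ofReal (ct * c)
      * ENNReal.ofReal (‖ftm μ z‖ ^ (2/θ) * ‖z‖ ^ e)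
      ≤ ∫⁻ w, ENNReal.ofReal (‖ftm μ z‖ ^ (2/θ)) * ENNReal.ofReal (‖prodMap k m (z, w)‖ ^ t)
          * ENNReal.ofReal (‖ftm ν w‖ ^ (2/θ)) := by
    intro z hz
    have hpm : Measurable fun w : Eℝ m => prodMap k m (z, w) :=
      (prodMap_measurable k m).comp measurable_prodMk_left
    have hmeasw : Measurable fun w : Eℝ m =>
        ENNReal.ofReal (‖ftm μ z‖ ^ (2/θ)) * ENNReal.ofReal (‖prodMap k m (z, w)‖ ^ t)
          * ENNReal.ofReal (‖ftm ν w‖ ^ (2/θ)) :=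
      (measurable_const.mul ((hrt.comp hpm.norm).ennreal_ofReal)).mul hHmeas
    have hz1 : (1:ℝ) ≤ ‖z‖ := hz
    have hzpos : 0 < ‖z‖ := lt_of_lt_of_le one_pos hz1
    have hmerge : ‖z‖ ^ e = ‖z‖ ^ t * ‖z‖ ^ ((m:ℝ) - β / θ) := by
      rw [← Real.rpow_add hzpos, ← hexp]
    have hreal : ct * c * (‖ftm μ z‖ ^ (2/θ) * ‖z‖ ^ e)
        = ‖ftm μ z‖ ^ (2/θ) * (ct * ‖z‖ ^ t) * (c * ‖z‖ ^ ((m:ℝ) - β / θ)) := by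
      rw [hmerge]; ring
    calc ENNReal.ofReal (ct * c) * ENNReal.ofReal (‖ftm μ z‖ ^ (2/θ) * ‖z‖ ^ e)
        = ENNReal.ofReal (‖ftm μ z‖ ^ (2/θ)) * ENNReal.ofReal (ct * ‖z‖ ^ t)
            * ENNReal.ofReal (c * ‖z‖ ^ ((m:ℝ) - β / θ)) := by
          rw [← ENNReal.ofReal_mul (by positivity), hreal,
            ENNReal.ofReal_mul (by positivity), ENNReal.ofReal_mul (by positivity)]
      _ ≤ ENNReal.ofReal (‖ftm μ z‖ ^ (2/θ)) * ENNReal.ofReal (ct * ‖z‖ ^ t)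
            * ∫⁻ w in {w : Eℝ m | ‖w‖ ≤ ‖z‖}, ENNReal.ofReal (‖ftm ν w‖ ^ (2/θ)) := by
          gcongr
          exact hbound ‖z‖ hz1
      _ = ∫⁻ w in {w : Eℝ m | ‖w‖ ≤ ‖z‖},
            ENNReal.ofReal (‖ftm μ z‖ ^ (2/θ)) * ENNReal.ofReal (ct * ‖z‖ ^ t)
              * ENNReal.ofReal (‖ftm ν w‖ ^ (2/θ)) := by
          rw [lintegral_const_mul _ hHmeas]
      _ ≤ ∫⁻ w in {w : Eℝ m | ‖w‖ ≤ ‖z‖},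
            ENNReal.ofReal (‖ftm μ z‖ ^ (2/θ)) * ENNReal.ofReal (‖prodMap k m (z, w)‖ ^ t)
              * ENNReal.ofReal (‖ftm ν w‖ ^ (2/θ)) := by
          refine setLIntegral_mono hmeasw ?_
          intro w hw
          have hwz : ‖w‖ ≤ ‖z‖ := hw
          have hsq := norm_prodMap_sq k m (z, w)
          have hN1 : ‖z‖ ≤ ‖prodMap k m (z,w)‖ := by
            apply le_of_pow_le_pow_left₀ two_ne_zero (norm_nonneg _)
            rw [hsq]
            nlinarith [sq_nonneg ‖w‖]
          have hN2 : ‖prodMap k m (z,w)‖ ≤ Real.sqrt 2 * ‖z‖ := by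
            apply le_of_pow_le_pow_left₀ two_ne_zero (by positivity)
            rw [mul_pow, Real.sq_sqrt (by norm_num : (0:ℝ) ≤ 2), hsq]
            nlinarith [norm_nonneg w, norm_nonneg z]
          have hrp : ct * ‖z‖ ^ t ≤ ‖prodMap k m (z,w)‖ ^ t := rpow_bound hzpos hN1 hN2 t
          gcongr
      _ ≤ ∫⁻ w, ENNReal.ofReal (‖ftm μ z‖ ^ (2/θ))
            * ENNReal.ofReal (‖prodMap k m (z, w)‖ ^ t)
            * ENNReal.ofReal (‖ftm ν w‖ ^ (2/θ)) := setLIntegral_le_lintegral _ _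
  have big : (∫⁻ z in A, ENNReal.ofReal (ct * c)
      * ENNReal.ofReal (‖ftm μ z‖ ^ (2/θ) * ‖z‖ ^ e)) < ∞ := by
    calc ∫⁻ z in A, ENNReal.ofReal (ct * c) * ENNReal.ofReal (‖ftm μ z‖ ^ (2/θ) * ‖z‖ ^ e)
        ≤ ∫⁻ z in A, ∫⁻ w, ENNReal.ofReal (‖ftm μ z‖ ^ (2/θ))
            * ENNReal.ofReal (‖prodMap k m (z, w)‖ ^ t)
            * ENNReal.ofReal (‖ftm ν w‖ ^ (2/θ)) := by
          refine setLIntegral_mono ?_ key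
          exact Measurable.lintegral_prod_right (f := fun z w =>
            ENNReal.ofReal (‖ftm μ z‖ ^ (2/θ)) * ENNReal.ofReal (‖prodMap k m (z, w)‖ ^ t)
              * ENNReal.ofReal (‖ftm ν w‖ ^ (2/θ))) hΦmeas
      _ ≤ ∫⁻ z, ∫⁻ w, ENNReal.ofReal (‖ftm μ z‖ ^ (2/θ))
            * ENNReal.ofReal (‖prodMap k m (z, w)‖ ^ t)
            * ENNReal.ofReal (‖ftm ν w‖ ^ (2/θ)) := setLIntegral_le_lintegral _ _
      _ = ∫⁻ p : Eℝ k × Eℝ m,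
            ENNReal.ofReal (‖ftm μ p.1‖ ^ (2/θ)) * ENNReal.ofReal (‖prodMap k m p‖ ^ t)
              * ENNReal.ofReal (‖ftm ν p.2‖ ^ (2/θ))
            ∂((volume : Measure (Eℝ k)).prod volume) :=
          (lintegral_prod _ hΦmeas.aemeasurable).symm
      _ < ∞ := hΦfin
  have tail : (∫⁻ z in A, ENNReal.ofReal (‖ftm μ z‖ ^ (2/θ) * ‖z‖ ^ e)) < ∞ := by
    rw [lintegral_const_mul _ hGmeas] at big
    exact ENNReal.lt_top_of_mul_ne_top_right big.ne
      (ENNReal.ofReal_pos.mpr (by positivity)).ne'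
  have small : (∫⁻ z in Aᶜ, ENNReal.ofReal (‖ftm μ z‖ ^ (2/θ) * ‖z‖ ^ e)) < ∞ := by
    set M := max 1 (μ Set.univ).toReal with hM
    have hM1 : (0:ℝ) < M := lt_of_lt_of_le one_pos (le_max_left _ _)
    have hAc : Aᶜ = {z : Eℝ k | ‖z‖ < 1} := by
      ext z; simp [hA, not_le]
    calc ∫⁻ z in Aᶜ, ENNReal.ofReal (‖ftm μ z‖ ^ (2/θ) * ‖z‖ ^ e)
        ≤ ∫⁻ z in Aᶜ, ENNReal.ofReal (M ^ (2/θ)) * ENNReal.ofReal (‖z‖ ^ e) := by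
          refine setLIntegral_mono
            (measurable_const.mul ((hre.comp measurable_norm).ennreal_ofReal)) ?_
          intro z _
          rw [ENNReal.ofReal_mul (by positivity)]
          gcongr
          exact le_trans (ftm_norm_le μ z) (le_max_right _ _)
      _ = ENNReal.ofReal (M ^ (2/θ)) * ∫⁻ z in Aᶜ, ENNReal.ofReal (‖z‖ ^ e) :=
          lintegral_const_mul _ ((hre.comp measurable_norm).ennreal_ofReal)
      _ < ∞ := by
          apply ENNReal.mul_lt_top ENNReal.ofReal_lt_top
          rw [hAc]
          exact lint_small_rpow k hk hee
  unfold Jfin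
  rw [← he]
  rw [← lintegral_add_compl (fun z : Eℝ k =>
    ENNReal.ofReal (‖ftm μ z‖ ^ (2/θ) * ‖z‖ ^ e)) hAmeas]
  exact ENNReal.add_lt_top.mpr ⟨tail, small⟩


/-- upper bound for the Fourier spectrum of a product via the upper averaged
Fourier dimensions of the marginals. Here `m` plays the role of `d - k`. -/
theorem stmt6 (k m : ℕ) (hk : 1 ≤ k) (hm : 1 ≤ m)
    (μ : Measure (Eℝ k)) (ν : Measure (Eℝ m))
    [IsFiniteMeasure μ] [IsFiniteMeasure ν] (hμ : μ ≠ 0) (hν : ν ≠ 0)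
    (θ : ℝ) (hθ : θ ∈ Set.Ioc (0 : ℝ) 1) :
    fSpec (k + m) (mprod μ ν) θ ≤
      max (ENNReal.ofReal (upperAvgF k μ θ) + fSpec m ν θ)
        (fSpec k μ θ + ENNReal.ofReal (upperAvgF m ν θ)) := by
  obtain ⟨hθ0, _hθ1⟩ := hθ
  have hθne : θ ≠ 0 := ne_of_gt hθ0
  rw [fSpec, if_neg hθne]
  refine iSup₂_le fun s hs => ?_
  obtain ⟨hs0, hJ⟩ := hs
  refine le_trans ?_ (le_max_right _ _)
  apply ENNReal.le_of_forall_pos_le_add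
  intro ε hε _hlt
  have hεR : 0 < (ε:ℝ) := hε
  obtain ⟨β, c, hβ0, hβlt, hc, hbound⟩ := avgF_exists m ν hν θ hθ0 hεR
  have hβ_le : ENNReal.ofReal β ≤ ENNReal.ofReal (upperAvgF m ν θ) + ε := by
    calc ENNReal.ofReal β ≤ ENNReal.ofReal (upperAvgF m ν θ + ε) :=
          ENNReal.ofReal_le_ofReal hβlt.le
      _ ≤ ENNReal.ofReal (upperAvgF m ν θ) + ENNReal.ofReal ε := ENNReal.ofReal_add_le
      _ = ENNReal.ofReal (upperAvgF m ν θ) + ε := by rw [ENNReal.ofReal_coe_nnreal]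
  rcases le_or_gt s β with hsβ | hsβ
  · calc ENNReal.ofReal s ≤ ENNReal.ofReal β := ENNReal.ofReal_le_ofReal hsβ
      _ ≤ ENNReal.ofReal (upperAvgF m ν θ) + ε := hβ_le
      _ ≤ fSpec k μ θ + ENNReal.ofReal (upperAvgF m ν θ) + ε :=
          add_le_add_left (self_le_add_left _ _) (ε : ℝ≥0∞)
  · have hfin : Jfin k μ (s - β) θ := key_lemma k m hk μ ν θ hθ0 s β c hc hsβ hbound hJ
    have hmem : (s - β) ∈ {s : ℝ | 0 ≤ s ∧ Jfin k μ s θ} := ⟨by linarith, hfin⟩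
    have hle : ENNReal.ofReal (s - β) ≤ fSpec k μ θ := by
      rw [fSpec, if_neg hθne]
      exact le_iSup₂ (f := fun s _ => ENNReal.ofReal s) (s - β) hmem
    calc ENNReal.ofReal s = ENNReal.ofReal ((s - β) + β) := by rw [sub_add_cancel]
      _ ≤ ENNReal.ofReal (s - β) + ENNReal.ofReal β := ENNReal.ofReal_add_le
      _ ≤ fSpec k μ θ + (ENNReal.ofReal (upperAvgF m ν θ) + ε) := add_le_add hle hβ_le
      _ = fSpec k μ θ + ENNReal.ofReal (upperAvgF m ν θ) + ε := by rw [add_assoc]
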